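/- With the maps of the context, let λ ∈ ℂ be arbitrary and suppose 2p = n′π for some integer n′. Then the finitely supported vector φ_{b0} := (e₁ − e₂ − e₄ + e₅)·δ₀ satisfies A_p φ_{b0} = (−1)^{n′}·φ_{b0}; i.e. φ_{b0} is a perfectly localized bound state of the interacting two-particle evolution at the critical values of the total momentum 2p ∈ πℤ. -/

import Mathlib

noncomputable section
open Matrix
open scoped Classical

/-- The 6×6 block-diagonal matrix `M = diag(O′, O′)`, where `O′` is the 3×3 matrix with rows
`(0, 0, −conj λ)`, `(0, 0, −conj λ)`, `(−λ, −λ, 0)`. -/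
def Mblk (l : ℂ) : Matrix (Fin 6) (Fin 6) ℂ :=
  !![0, 0, -(starRingEnd ℂ) l, 0, 0, 0;
     0, 0, -(starRingEnd ℂ) l, 0, 0, 0;
     -l, -l, 0, 0, 0, 0;
     0, 0, 0, 0, 0, -(starRingEnd ℂ) l;
     0, 0, 0, 0, 0, -(starRingEnd ℂ) l;
     0, 0, 0, -l, -l, 0]

/-- The one-step interaction unitary `E = exp(−i·M)`. -/
def Emat (l : ℂ) : Matrix (Fin 6) (Fin 6) ℂ := NormedSpace.exp ((-Complex.I) • Mblk l)

/-- The swap `S`: `(S x)(y) = (x(−y)₄, x(−y)₅, x(−y)₆, x(−y)₁, x(−y)₂, x(−y)₃)`. -/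
def Sop (x : ℤ → Fin 6 → ℂ) : ℤ → Fin 6 → ℂ := fun y i => x (-y) (![3, 4, 5, 0, 1, 2] i)

/-- The antisymmetrizer `P₋ = (1/2)(id − S)`. -/
def Pneg (x : ℤ → Fin 6 → ℂ) : ℤ → Fin 6 → ℂ := fun y i => (1 / 2) * (x y i - Sop x y i)

/-- The free evolution `D_p` at total momentum `p`:
`(D_p x)(y) = (e^{2ip} x(y)₁, e^{−2ip} x(y)₂, x(y+2)₃, e^{2ip} x(y)₄, e^{−2ip} x(y)₅, x(y−2)₆)`. -/
def Dop (p : ℝ) (x : ℤ → Fin 6 → ℂ) : ℤ → Fin 6 → ℂ := fun y =>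
  ![Complex.exp (2 * p * Complex.I) * x y 0,
    Complex.exp (-(2 * p) * Complex.I) * x y 1,
    x (y + 2) 2,
    Complex.exp (2 * p * Complex.I) * x y 3,
    Complex.exp (-(2 * p) * Complex.I) * x y 4,
    x (y - 2) 5]

/-- The interaction `J`: `(J x)(0) = E · x(0)` and `(J x)(y) = x(y)` for `y ≠ 0`. -/
def Jop (l : ℂ) (x : ℤ → Fin 6 → ℂ) : ℤ → Fin 6 → ℂ := fun y =>
  if y = 0 then (Emat l).mulVec (x 0) else x y

/-- The one-step two-particle evolution `A_p = P₋ ∘ J ∘ D_p ∘ P₋`. -/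
def Aop (l : ℂ) (p : ℝ) : (ℤ → Fin 6 → ℂ) → (ℤ → Fin 6 → ℂ) :=
  Pneg ∘ Jop l ∘ Dop p ∘ Pneg

/-! `φ_{b0}` is odd under the swap `S`, so `P₋` fixes it. Its third and sixth components vanish,
so at `2p ∈ πℤ` the free step `D_p` multiplies it by `e^{±2ip} = (−1)^{n′}`. Finally
`(1, −1, 0, −1, 1, 0)` lies in the kernel of `M`, so `E = exp(−iM)` fixes it and `J` acts
trivially on `φ_{b0}`. -/

open NormedSpace

theorem NormedSpace.exp_mul_of_mul_eq_zero {𝔸 : Type*} [NormedRing 𝔸] [NormedAlgebra ℚ 𝔸]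
    [CompleteSpace 𝔸] {a b : 𝔸} (h : a * b = 0) : exp a * b = b := by
  have hterm : ∀ n ≠ 0, ((n.factorial : ℚ)⁻¹ • a ^ n) * b = 0 := fun n hn => by
    rw [smul_mul_assoc, ← Nat.succ_pred_eq_of_ne_zero hn, pow_succ, mul_assoc, h, mul_zero,
      smul_zero]
  have hsingle := hasSum_single 0 hterm
  rw [Nat.factorial_zero, Nat.cast_one, inv_one, one_smul, pow_zero, one_mul] at hsingle
  exact ((exp_series_hasSum_exp' (𝕂 := ℚ) a).mul_right b).unique hsingle

theorem Matrix.exp_mulVec_of_mulVec_eq_zero {n 𝕜 : Type*} [Fintype n] [DecidableEq n]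
    [RCLike 𝕜] {A : Matrix n n 𝕜} {v : n → 𝕜} (h : A *ᵥ v = 0) : exp A *ᵥ v = v := by
  -- every column of `vecMulVec v 1` is `v`
  have hmul : exp A * vecMulVec v 1 = vecMulVec v 1 :=
    open scoped Norms.Operator in
    NormedSpace.exp_mul_of_mul_eq_zero (by rw [mul_vecMulVec, h, zero_vecMulVec])
  rw [mul_vecMulVec] at hmul
  funext i
  simpa [vecMulVec_apply] using congrFun (congrFun hmul i) i

theorem Complex.exp_mul_I_of_eq_int_mul_pi {t : ℝ} {n : ℤ} (h : t = n * Real.pi) :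
    Complex.exp (t * Complex.I) = (-1) ^ n := by
  rw [h, Complex.ofReal_mul, Complex.ofReal_intCast, mul_assoc, Complex.exp_int_mul,
    Complex.exp_pi_mul_I]

theorem Complex.exp_neg_mul_I_of_eq_int_mul_pi {t : ℝ} {n : ℤ} (h : t = n * Real.pi) :
    Complex.exp (-t * Complex.I) = (-1) ^ n := by
  have hneg : -t = ((-n : ℤ) : ℝ) * Real.pi := by rw [h]; push_cast; ring
  rw [← Complex.ofReal_neg, Complex.exp_mul_I_of_eq_int_mul_pi hneg, ← _root_.inv_zpow',
    inv_neg_one]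

def boundVec : Fin 6 → ℂ := ![1, -1, 0, -1, 1, 0]

def boundState : ℤ → Fin 6 → ℂ := fun y => if y = 0 then boundVec else 0

theorem Mblk_mulVec_boundVec (l : ℂ) : Mblk l *ᵥ boundVec = 0 := by
  ext i
  fin_cases i <;> simp [Mblk, boundVec, mulVec, dotProduct, Fin.sum_univ_succ]

theorem Emat_mulVec_boundVec (l : ℂ) : Emat l *ᵥ boundVec = boundVec :=
  exp_mulVec_of_mulVec_eq_zero (by rw [smul_mulVec, Mblk_mulVec_boundVec, smul_zero])

theorem Sop_boundState : Sop boundState = -boundState := by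
  ext y i
  by_cases hy : y = 0
  · subst hy
    fin_cases i <;> simp [Sop, boundState, boundVec]
  · simp [Sop, boundState, hy]

theorem Pneg_eq_self_of_Sop_eq_neg {x : ℤ → Fin 6 → ℂ} (h : Sop x = -x) : Pneg x = x := by
  ext y i
  simp only [Pneg, h, Pi.neg_apply]
  ring

theorem Pneg_smul (c : ℂ) (x : ℤ → Fin 6 → ℂ) : Pneg (c • x) = c • Pneg x := by
  ext y i
  simp only [Pneg, Sop, Pi.smul_apply, smul_eq_mul]
  ring

theorem Jop_smul (l c : ℂ) (x : ℤ → Fin 6 → ℂ) : Jop l (c • x) = c • Jop l x := by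
  ext y : 1
  by_cases hy : y = 0 <;> simp [Jop, hy, mulVec_smul]

theorem Jop_boundState (l : ℂ) : Jop l boundState = boundState := by
  ext y : 1
  by_cases hy : y = 0 <;> simp [Jop, boundState, hy, Emat_mulVec_boundVec]

theorem Dop_eq_smul_of_two_mul_eq_int_mul_pi {p : ℝ} {n : ℤ} (hp : 2 * p = n * Real.pi)
    {x : ℤ → Fin 6 → ℂ} (hx₂ : ∀ y, x y 2 = 0) (hx₅ : ∀ y, x y 5 = 0) :
    Dop p x = (-1 : ℂ) ^ n • x := by
  have hplus := Complex.exp_mul_I_of_eq_int_mul_pi hp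
  have hminus := Complex.exp_neg_mul_I_of_eq_int_mul_pi hp
  push_cast at hplus hminus
  rw [neg_mul] at hminus
  ext y i
  fin_cases i <;> simp [Dop, hplus, hminus, hx₂, hx₅]

theorem Dop_boundState {p : ℝ} {n : ℤ} (hp : 2 * p = n * Real.pi) :
    Dop p boundState = (-1 : ℂ) ^ n • boundState := by
  apply Dop_eq_smul_of_two_mul_eq_int_mul_pi hp <;>
    intro y <;> by_cases hy : y = 0 <;> simp [boundState, boundVec, hy]

/-- For any coupling `λ` and total momentum `p` with `2p = n′π` for some integer `n′`, the
perfectly localized vector `φ_{b0} = (e₁ − e₂ − e₄ + e₅)·δ₀` is a bound state of the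
interacting two-particle evolution: `A_p φ_{b0} = (−1)^{n′} φ_{b0}`. -/
theorem Aop_bound_state_critical_momentum (l : ℂ) (p : ℝ) (n' : ℤ)
    (hp : 2 * p = n' * Real.pi) :
    let φb0 : ℤ → Fin 6 → ℂ := fun y => if y = 0 then ![1, -1, 0, -1, 1, 0] else 0
    Aop l p φb0 = fun y i => (-1 : ℂ) ^ n' * φb0 y i := by
  show Aop l p boundState = (-1 : ℂ) ^ n' • boundState
  have hPneg : Pneg boundState = boundState := Pneg_eq_self_of_Sop_eq_neg Sop_boundState
  simp only [Aop, Function.comp_apply]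
  rw [hPneg, Dop_boundState hp, Jop_smul, Jop_boundState, Pneg_smul, hPneg]
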